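/- arXiv:1607.04026 — 2 statements merged into one kernel-verified Lean document; each statement's English description precedes it below -/
import Mathlib

section
/- Let n, k ∈ ℕ with k < n, let H ⊆ ℝ with |H| ≥ n+1, let ω = (ω₁, …, ω_n) : H → ℝⁿ be an n-dimensional positive Chebyshev system over H such that ω_{⟨k⟩} and ω_{⟨k+1⟩} are k- and (k+1)-dimensional positive Chebyshev systems over H, and let f : H → ℝ. Suppose there exists ℓ ∈ {0, …, k} such that for every k-tuple x₁ < … < x_k in H, the function x ↦ [x₁, …, x_k, x; f]_{ω_{⟨k+1⟩}} is convex with respect to the (n−k)-dimensional Chebyshev system formed by the functions x ↦ [x₁, …, x_k, x; ω_j]_{ω_{⟨k+1⟩}} (j ∈ {k+1, …, n}) on H ∩ (−∞, x₁) if ℓ = 0, on H ∩ (x_ℓ, x_{ℓ+1}) if 0 < ℓ < k, and on H ∩ (x_k, +∞) if ℓ = k. Then f is ω-convex on H. -/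
/-- `Φ_ω(x₁,…,x_m) = det(ω_i(x_j))`. -/
noncomputable def Phi {m : ℕ} (ω : Fin m → ℝ → ℝ) (x : Fin m → ℝ) : ℝ :=
  Matrix.det (Matrix.of fun i j => ω i (x j))

/-- `ω` is an `m`-dimensional positive Chebyshev system over `H`. -/
def IsPosChebyshev {m : ℕ} (ω : Fin m → ℝ → ℝ) (H : Set ℝ) : Prop :=
  ∀ x : Fin m → ℝ, (∀ i, x i ∈ H) → StrictMono x → 0 < Phi ω x

/-- `f` is convex with respect to the `m`-dimensional system `ω` on `S`. -/
def IsConvexWRT {m : ℕ} (ω : Fin m → ℝ → ℝ) (S : Set ℝ) (f : ℝ → ℝ) : Prop :=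
  ∀ x : Fin (m + 1) → ℝ, (∀ i, x i ∈ S) → StrictMono x → 0 ≤ Phi (Fin.snoc ω f) x

/-- The generalized divided difference `[x₁,…,x_k; f]_{ω⟨k⟩}`:
the numerator replaces the last function `ω_k` by `f`. -/
noncomputable def divDiff {k : ℕ} (ω : Fin k → ℝ → ℝ) (f : ℝ → ℝ) (x : Fin k → ℝ) : ℝ :=
  Phi (fun i => if (i : ℕ) + 1 = k then f else ω i) x / Phi ω x

/-!
Fix `z₀ < ⋯ < zₙ` in `H`, let `y = (z_ℓ, …, z_{ℓ+n-k})` and let `x` be the remaining `k` points,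
so that every `y_j` lies in the `ℓ`-th gap of `x`. Sylvester's determinant identity, applied to
`(ω, f)` evaluated at `(x, y)` with pivot block `(ω_i(x_j))_{i<k}`, says that the determinant of
the divided differences `[x, y_j; ω_{k+r}]` (last row `f`) at `y` equals
`Φ_{ω⟨k⟩}(x)^{n-k} Φ_{(ω,f)}(x, y) / ∏_j Φ_{ω⟨k+1⟩}(x, y_j)`. Sorting the points turns every
determinant here into a positive Chebyshev determinant or `Φ_{(ω,f)}(z)`, and the signs of the
sorting permutations cancel, so the hypothesis forces `Φ_{(ω,f)}(z) ≥ 0`.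
-/

open Matrix Equiv

/-- Sylvester's determinant identity. -/
theorem Matrix.det_of_det_fromBlocks_bordered {R ι : Type*} [CommRing R] [Fintype ι]
    [DecidableEq ι] {m : ℕ} (A : Matrix ι ι R) (B : Matrix ι (Fin (m + 1)) R)
    (C : Matrix (Fin (m + 1)) ι R) (D : Matrix (Fin (m + 1)) (Fin (m + 1)) R)
    (hA : IsUnit A.det) :
    det (of fun i j => det (fromBlocks A (replicateCol (Fin 1) (Bᵀ j)) (replicateRow (Fin 1) (C i))
      (of fun _ _ => D i j))) = A.det ^ m * det (fromBlocks A B C D) := by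
  have := A.invertibleOfIsUnitDet hA
  have hminor : (of fun i j => det (fromBlocks A (replicateCol (Fin 1) (Bᵀ j))
      (replicateRow (Fin 1) (C i)) (of fun _ _ => D i j))) = A.det • (D - C * ⅟A * B) := by
    ext i j
    simp [det_fromBlocks₁₁, Matrix.mul_apply, replicateRow, replicateCol]
  rw [hminor, det_smul, det_fromBlocks₁₁, Fintype.card_fin]
  ring

lemma Phi_comp_perm {m : ℕ} (ω : Fin m → ℝ → ℝ) (x : Fin m → ℝ) (σ : Perm (Fin m)) :
    Phi ω (x ∘ σ) = Perm.sign σ * Phi ω x :=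
  det_permute' σ (of fun i j => ω i (x j))

lemma Phi_eq_det_fromBlocks {a b N : ℕ} (e : Fin a ⊕ Fin b ≃ Fin N) (ω : Fin N → ℝ → ℝ)
    (x : Fin N → ℝ) :
    Phi ω x = det (fromBlocks (of fun i j => ω (e (.inl i)) (x (e (.inl j))))
      (of fun i j => ω (e (.inl i)) (x (e (.inr j))))
      (of fun i j => ω (e (.inr i)) (x (e (.inl j))))
      (of fun i j => ω (e (.inr i)) (x (e (.inr j))))) := by
  rw [Phi, ← det_submatrix_equiv_self e]
  congr 1
  ext (i | i) (j | j) <;> rfl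

lemma Phi_snoc_snoc {k : ℕ} (ω : Fin k → ℝ → ℝ) (g : ℝ → ℝ) (x : Fin k → ℝ) (t : ℝ) :
    Phi (Fin.snoc ω g) (Fin.snoc x t) = det (fromBlocks (of fun i j => ω i (x j))
      (replicateCol (Fin 1) fun i => ω i t) (replicateRow (Fin 1) fun j => g (x j))
      (of fun _ _ => g t)) := by
  rw [Phi_eq_det_fromBlocks finSumFinEquiv]
  congr 1
  have hlast : ∀ i : Fin 1, Fin.natAdd k i = Fin.last k := fun i => by
    rw [Subsingleton.elim i 0]; rfl
  have hcast : ∀ i : Fin k, Fin.castAdd 1 i = i.castSucc := fun _ => rfl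
  ext (i | i) (j | j) <;> simp [replicateCol, replicateRow, hlast, hcast]

lemma Phi_snoc_eq_neg_one_pow_mul_Phi_insertNth {k : ℕ} (ω : Fin (k + 1) → ℝ → ℝ)
    (x : Fin k → ℝ) (t : ℝ) (p : Fin (k + 1)) :
    Phi ω (Fin.snoc x t) = (-1) ^ (k + p : ℕ) * Phi ω (p.insertNth t x) := by
  -- both tuples are `Fin.cons t x` precomposed with a `Fin.cycleRange`
  rw [← Fin.insertNth_last', ← Fin.cons_comp_cycleRange, ← Fin.cons_comp_cycleRange,
    Phi_comp_perm, Phi_comp_perm, Fin.sign_cycleRange, Fin.sign_cycleRange]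
  push_cast
  rw [← mul_assoc, ← pow_add, add_assoc, pow_add, ← two_mul, pow_mul]
  simp

lemma divDiff_eq {k : ℕ} (ω : Fin (k + 1) → ℝ → ℝ) (g : ℝ → ℝ) (x : Fin (k + 1) → ℝ) :
    divDiff ω g x = Phi (Fin.snoc (fun i => ω i.castSucc) g) x / Phi ω x := by
  rw [divDiff]
  congr 2
  ext i : 1
  cases i using Fin.lastCases with
  | last => simp
  | cast i => simp [Fin.snoc_castSucc, i.isLt.ne]

lemma Phi_divDiff_snoc {k m : ℕ} (ω : Fin (k + 1) → ℝ → ℝ) (ψ : Fin m → ℝ → ℝ)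
    (x : Fin k → ℝ) (y : Fin m → ℝ) :
    Phi (fun r t => divDiff ω (ψ r) (Fin.snoc x t)) y =
      (∏ j, Phi ω (Fin.snoc x (y j)))⁻¹ *
        det (of fun r j => Phi (Fin.snoc (fun i => ω i.castSucc) (ψ r)) (Fin.snoc x (y j))) := by
  rw [← Finset.prod_inv_distrib, ← det_mul_row, Phi]
  congr 1
  ext r j
  simp [divDiff_eq, div_eq_inv_mul]

theorem Phi_divDiff_snoc_mul_prod {k m : ℕ} (ω : Fin (k + 1) → ℝ → ℝ)
    (ψ : Fin (m + 1) → ℝ → ℝ) (x : Fin k → ℝ) (y : Fin (m + 1) → ℝ)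
    (hx : Phi (fun i => ω i.castSucc) x ≠ 0) (hy : ∀ j, Phi ω (Fin.snoc x (y j)) ≠ 0) :
    Phi (fun r t => divDiff ω (ψ r) (Fin.snoc x t)) y * ∏ j, Phi ω (Fin.snoc x (y j)) =
      Phi (fun i => ω i.castSucc) x ^ m *
        det (fromBlocks (of fun i j => ω i.castSucc (x j)) (of fun i j => ω i.castSucc (y j))
          (of fun r j => ψ r (x j)) (of fun r j => ψ r (y j))) := by
  rw [Phi_divDiff_snoc, mul_right_comm,
    inv_mul_cancel₀ (Finset.prod_ne_zero_iff.2 fun j _ => hy j), one_mul, Phi,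
    ← det_of_det_fromBlocks_bordered _ _ _ _ hx.isUnit]
  simp only [Phi_snoc_snoc]
  rfl

lemma Phi_snoc_append {n k : ℕ} (hk : k < n) (ω : Fin n → ℝ → ℝ) (f : ℝ → ℝ) (x : Fin k → ℝ)
    (y : Fin (n - k + 1) → ℝ) :
    Phi (Fin.snoc ω f) (Fin.append x y ∘ Fin.cast (by omega)) =
      det (fromBlocks (of fun i j => ω (Fin.castLE hk.le i) (x j))
        (of fun i j => ω (Fin.castLE hk.le i) (y j))
        (of fun r j => (Fin.snoc (fun i : Fin (n - k) => ω ⟨k + i, by omega⟩) f :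
          Fin (n - k + 1) → ℝ → ℝ) r (x j))
        (of fun r j => (Fin.snoc (fun i : Fin (n - k) => ω ⟨k + i, by omega⟩) f :
          Fin (n - k + 1) → ℝ → ℝ) r (y j))) := by
  have hrowl : ∀ i : Fin k, (Fin.snoc ω f : Fin (n + 1) → ℝ → ℝ)
      (Fin.cast (by omega) (Fin.castAdd (n - k + 1) i)) = ω (Fin.castLE hk.le i) := by
    intro i
    rw [show Fin.cast _ (Fin.castAdd (n - k + 1) i) = (Fin.castLE hk.le i).castSucc from
      Fin.ext (by simp), Fin.snoc_castSucc]
  have hrow : ∀ r : Fin (n - k + 1),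
      (Fin.snoc ω f : Fin (n + 1) → ℝ → ℝ) (Fin.cast (by omega) (Fin.natAdd k r)) =
        (Fin.snoc (fun i : Fin (n - k) => ω ⟨k + i, by omega⟩) f : Fin (n - k + 1) → ℝ → ℝ) r := by
    intro r
    cases r using Fin.lastCases with
    | last =>
      rw [show Fin.cast _ (Fin.natAdd k (Fin.last (n - k))) = Fin.last n from
        Fin.ext (by simp; omega)]
      simp
    | cast i =>
      rw [show Fin.cast _ (Fin.natAdd k i.castSucc) = (⟨k + i, by omega⟩ : Fin n).castSucc from
        Fin.ext (by simp)]
      rw [Fin.snoc_castSucc, Fin.snoc_castSucc]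
  rw [Phi_eq_det_fromBlocks
    (finSumFinEquiv.trans (finCongr (show k + (n - k + 1) = n + 1 by omega)))]
  congr 1
  ext (i | i) (j | j) <;> simp [hrowl, hrow]

theorem Phi_divDiff_mul_prod_eq_Phi_snoc_append {n k : ℕ} (hk : k < n) (ω : Fin n → ℝ → ℝ)
    (f : ℝ → ℝ) (x : Fin k → ℝ) (y : Fin (n - k + 1) → ℝ)
    (hx : Phi (fun i : Fin k => ω (Fin.castLE hk.le i)) x ≠ 0)
    (hy : ∀ j, Phi (fun i : Fin (k + 1) => ω (Fin.castLE hk i)) (Fin.snoc x (y j)) ≠ 0) :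
    Phi (Fin.snoc
        (fun (j : Fin (n - k)) t =>
          divDiff (fun i : Fin (k + 1) => ω (Fin.castLE hk i)) (ω ⟨k + j, by omega⟩) (Fin.snoc x t))
        (fun t => divDiff (fun i : Fin (k + 1) => ω (Fin.castLE hk i)) f (Fin.snoc x t))) y *
      ∏ j, Phi (fun i : Fin (k + 1) => ω (Fin.castLE hk i)) (Fin.snoc x (y j)) =
    Phi (fun i : Fin k => ω (Fin.castLE hk.le i)) x ^ (n - k) *
      Phi (Fin.snoc ω f) (Fin.append x y ∘ Fin.cast (by omega)) := by
  rw [Phi_snoc_append hk]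
  convert Phi_divDiff_snoc_mul_prod (fun i : Fin (k + 1) => ω (Fin.castLE hk i))
    (Fin.snoc (fun i : Fin (n - k) => ω ⟨k + i, by omega⟩) f) x y hx hy using 3
  · exact (Fin.comp_snoc (fun g t => divDiff (fun i : Fin (k + 1) => ω (Fin.castLE hk i)) g
      (Fin.snoc x t)) (fun i : Fin (n - k) => ω ⟨k + i, by omega⟩) f).symm
  · rfl
  · rfl

lemma neg_one_pow_mul_Phi_snoc_pos {k : ℕ} {H : Set ℝ} {ω : Fin (k + 1) → ℝ → ℝ}
    (hω : IsPosChebyshev ω H) {x : Fin k → ℝ} (hxH : ∀ i, x i ∈ H) (hx : StrictMono x)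
    {ℓ : ℕ} (hℓ : ℓ ≤ k) {t : ℝ} (htH : t ∈ H) (hlt : ∀ i : Fin k, (i : ℕ) < ℓ → x i < t)
    (hgt : ∀ i : Fin k, ℓ ≤ (i : ℕ) → t < x i) :
    0 < (-1) ^ (k + ℓ) * Phi ω (Fin.snoc x t) := by
  set p : Fin (k + 1) := ⟨ℓ, by omega⟩
  have hmono : StrictMono (p.insertNth t x) :=
    (Fin.strictMono_insertNth_iff p t x).2 ⟨hx, fun i hi => hlt i hi, fun i hi => hgt i hi⟩
  have hpos := hω _ (fun i => by cases i using p.succAboveCases <;> simp [htH, hxH]) hmono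
  rw [Phi_snoc_eq_neg_one_pow_mul_Phi_insertNth ω x t p, ← mul_assoc, ← pow_add, ← two_mul,
    pow_mul]
  simpa using hpos

def tailRotate (N ℓ t : ℕ) (hℓ : ℓ ≤ N) : Perm (Fin (N + 1)) :=
  (finSumFinEquiv.trans (finCongr (show ℓ + (N - ℓ + 1) = N + 1 by omega))).permCongr
    (sumCongr (Equiv.refl _) (finRotate (N - ℓ + 1) ^ t))

lemma sign_tailRotate (N ℓ t : ℕ) (hℓ : ℓ ≤ N) :
    Perm.sign (tailRotate N ℓ t hℓ) = (-1) ^ ((N - ℓ) * t) := by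
  simp [tailRotate, sign_finRotate, pow_mul]

open Fin.NatCast Fin.CommRing in
lemma val_finRotate_pow (L t : ℕ) (q : Fin (L + 1)) :
    ((finRotate (L + 1) ^ t) q : ℕ) = (q + t) % (L + 1) := by
  have : (finRotate (L + 1) ^ t) q = q + (t : Fin (L + 1)) := by
    induction t with
    | zero => simp
    | succ t ih =>
      rw [pow_succ', Perm.mul_apply, ih, finRotate_apply]
      push_cast
      ring
  simp [this, Fin.val_add, Fin.val_natCast, Nat.add_mod_mod]

lemma val_tailRotate (N ℓ t : ℕ) (hℓ : ℓ ≤ N) (p : Fin (N + 1)) :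
    (tailRotate N ℓ t hℓ p : ℕ) =
      if (p : ℕ) < ℓ then (p : ℕ) else ℓ + (p - ℓ + t) % (N - ℓ + 1) := by
  set e := finSumFinEquiv.trans (finCongr (show ℓ + (N - ℓ + 1) = N + 1 by omega))
  obtain ⟨s, rfl⟩ := e.surjective p
  rw [tailRotate, permCongr_apply, symm_apply_apply]
  rcases s with i | q
  · simp [e]
  · simp [e, val_finRotate_pow]

lemma val_tailRotate_castAdd {n k ℓ : ℕ} (hk : k < n) (hℓ : ℓ ≤ k) (i : Fin k) :
    (tailRotate n ℓ (n - k + 1) (hℓ.trans hk.le)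
      (Fin.cast (by omega) (Fin.castAdd (n - k + 1) i)) : ℕ) =
      if (i : ℕ) < ℓ then (i : ℕ) else i + (n - k + 1) := by
  rw [val_tailRotate]
  simp only [Fin.val_cast, Fin.val_castAdd]
  split_ifs
  · rfl
  · rw [Nat.mod_eq_of_lt (by omega)]
    omega

lemma val_tailRotate_natAdd {n k ℓ : ℕ} (hk : k < n) (hℓ : ℓ ≤ k) (j : Fin (n - k + 1)) :
    (tailRotate n ℓ (n - k + 1) (hℓ.trans hk.le) (Fin.cast (by omega) (Fin.natAdd k j)) : ℕ) =
      ℓ + j := by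
  rw [val_tailRotate]
  simp only [Fin.val_cast, Fin.val_natAdd]
  rw [if_neg (by omega), show k + j - ℓ + (n - k + 1) = j + (n - ℓ + 1) by omega,
    Nat.add_mod_right, Nat.mod_eq_of_lt (by omega)]

lemma StrictMono.exists_gap_split {n k ℓ : ℕ} (hk : k < n) (hℓ : ℓ ≤ k) {z : Fin (n + 1) → ℝ}
    (hz : StrictMono z) :
    ∃ (x : Fin k → ℝ) (y : Fin (n - k + 1) → ℝ), StrictMono x ∧ StrictMono y ∧
      (∀ (i : Fin k) j, ((i : ℕ) < ℓ → x i < y j) ∧ (ℓ ≤ (i : ℕ) → y j < x i)) ∧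
      (∀ i, x i ∈ Set.range z) ∧ (∀ j, y j ∈ Set.range z) ∧
      ∀ Ω : Fin (n + 1) → ℝ → ℝ,
        Phi Ω z =
          (-1) ^ ((n - ℓ) * (n - k + 1)) * Phi Ω (Fin.append x y ∘ Fin.cast (by omega)) := by
  have hn : k + (n - k + 1) = n + 1 := by omega
  -- `z ∘ π` lists the points outside the block `z_ℓ, …, z_{ℓ+n-k}` first, then that block
  set π := tailRotate n ℓ (n - k + 1) (hℓ.trans hk.le)
  set x : Fin k → ℝ := fun i => z (π (Fin.cast hn (Fin.castAdd _ i)))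
  set y : Fin (n - k + 1) → ℝ := fun j => z (π (Fin.cast hn (Fin.natAdd k j)))
  have hzlt : ∀ p q : Fin (n + 1), (p : ℕ) < q → z p < z q := fun p q h => hz h
  have hpts : Fin.append x y ∘ Fin.cast hn.symm = z ∘ π := by
    funext p
    obtain ⟨q, rfl⟩ : ∃ q, Fin.cast hn q = p := ⟨Fin.cast hn.symm p, by simp⟩
    cases q using Fin.addCases <;> simp [x, y]
  refine ⟨x, y, fun i i' h => hzlt _ _ ?_, fun j j' h => hzlt _ _ ?_, fun i j => ?_,
    fun i => ⟨_, rfl⟩, fun j => ⟨_, rfl⟩, fun Ω => ?_⟩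
  · simp only [π, val_tailRotate_castAdd hk hℓ]
    split_ifs <;> omega
  · simp only [π, val_tailRotate_natAdd hk hℓ]
    omega
  · constructor <;> intro hi <;> apply hzlt <;>
      simp only [π, val_tailRotate_castAdd hk hℓ, val_tailRotate_natAdd hk hℓ] <;>
      split_ifs <;> omega
  · rw [hpts, Phi_comp_perm, sign_tailRotate, ← mul_assoc]
    push_cast
    rw [← pow_add, ← two_mul, pow_mul, neg_one_sq, one_pow, one_mul]

lemma neg_one_pow_sub_mul_eq {n k ℓ : ℕ} (hℓ : ℓ ≤ k) (hk : k ≤ n) :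
    (-1 : ℝ) ^ ((n - ℓ) * (n - k + 1)) = (-1) ^ ((k + ℓ) * (n - k + 1)) := by
  obtain ⟨t, ht⟩ := Nat.even_mul_succ_self (n - k)
  have h : (n - ℓ) * (n - k + 1) + 2 * (ℓ * (n - k + 1)) = (k + ℓ) * (n - k + 1) + (t + t) := by
    rw [← ht, ← mul_assoc, ← add_mul, ← add_mul]
    congr 1
    omega
  rw [neg_one_pow_eq_pow_mod_two, neg_one_pow_eq_pow_mod_two (n := (k + ℓ) * _)]
  congr 1
  omega

lemma neg_one_pow_mul_Phi_snoc_append_nonneg {n k ℓ : ℕ} (hk : k < n) (hℓ : ℓ ≤ k)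
    (ω : Fin n → ℝ → ℝ) (f : ℝ → ℝ) (x : Fin k → ℝ) (y : Fin (n - k + 1) → ℝ)
    (hx : 0 < Phi (fun i : Fin k => ω (Fin.castLE hk.le i)) x)
    (hy : ∀ j, 0 < (-1) ^ (k + ℓ) * Phi (fun i : Fin (k + 1) => ω (Fin.castLE hk i))
      (Fin.snoc x (y j)))
    (hdiv : 0 ≤ Phi (Fin.snoc
        (fun (j : Fin (n - k)) t =>
          divDiff (fun i : Fin (k + 1) => ω (Fin.castLE hk i)) (ω ⟨k + j, by omega⟩) (Fin.snoc x t))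
        (fun t => divDiff (fun i : Fin (k + 1) => ω (Fin.castLE hk i)) f (Fin.snoc x t))) y) :
    0 ≤ (-1) ^ ((n - ℓ) * (n - k + 1)) *
      Phi (Fin.snoc ω f) (Fin.append x y ∘ Fin.cast (by omega)) := by
  have key := Phi_divDiff_mul_prod_eq_Phi_snoc_append hk ω f x y hx.ne' fun j h0 => by
    simpa [h0] using hy j
  have hprod := Finset.prod_pos fun j (_ : j ∈ Finset.univ) => hy j
  rw [Finset.prod_mul_distrib, Finset.prod_const, Finset.card_univ, Fintype.card_fin, ← pow_mul,
    ← neg_one_pow_sub_mul_eq hℓ hk.le] at hprod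
  refine nonneg_of_mul_nonneg_right ?_ (pow_pos hx (n - k))
  linear_combination mul_nonneg hdiv hprod.le + (-1) ^ ((n - ℓ) * (n - k + 1)) * key

/-- Theorem 2, (iii) ⇒ (i): if there exists `ℓ ∈ {0,…,k}` such that, for each
`x₁ < … < x_k` in `H`, the function `x ↦ [x₁,…,x_k,x; f]_{ω⟨k+1⟩}` is convex with respect to
the `(n-k)`-dimensional system `x ↦ [x₁,…,x_k,x; ω_j]_{ω⟨k+1⟩}` on `H ∩ (-∞, x₁)` if `ℓ = 0`,
on `H ∩ (x_ℓ, x_{ℓ+1})` if `0 < ℓ < k`, and on `H ∩ (x_k, ∞)` if `ℓ = k` (these three cases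
are captured uniformly by the set `{y | x_i < y for i ≤ ℓ and y < x_i for i > ℓ}`),
then `f` is `ω`-convex on `H`. -/
theorem divided_difference_convex_implies_omega_convex (n k : ℕ) (hk : k < n) (H : Set ℝ)
    (ω : Fin n → ℝ → ℝ) (f : ℝ → ℝ)
    (hωk : IsPosChebyshev (fun i : Fin k => ω (Fin.castLE (by omega) i)) H)
    (hωk1 : IsPosChebyshev (fun i : Fin (k + 1) => ω (Fin.castLE hk i)) H)
    (hyp : ∃ ℓ : ℕ, ℓ ≤ k ∧
      ∀ x : Fin k → ℝ, (∀ i, x i ∈ H) → StrictMono x →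
        IsConvexWRT
          (fun j : Fin (n - k) => fun y : ℝ =>
            divDiff (fun i : Fin (k + 1) => ω (Fin.castLE hk i))
              (ω ⟨k + (j : ℕ), by have := j.isLt; omega⟩) (Fin.snoc x y))
          (H ∩ {y : ℝ | (∀ i : Fin k, (i : ℕ) < ℓ → x i < y) ∧
            (∀ i : Fin k, ℓ ≤ (i : ℕ) → y < x i)})
          (fun y : ℝ =>
            divDiff (fun i : Fin (k + 1) => ω (Fin.castLE hk i)) f (Fin.snoc x y))) :
    IsConvexWRT ω H f := by
  obtain ⟨ℓ, hℓ, hcvx⟩ := hyp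
  intro z hzH hz
  obtain ⟨x, y, hx, hy, hgap, hxz, hyz, hPhi⟩ := hz.exists_gap_split hk hℓ
  have hrange : Set.range z ⊆ H := Set.range_subset_iff.2 hzH
  have hxH : ∀ i, x i ∈ H := fun i => hrange (hxz i)
  have hyH : ∀ j, y j ∈ H := fun j => hrange (hyz j)
  rw [hPhi]
  refine neg_one_pow_mul_Phi_snoc_append_nonneg hk hℓ ω f x y (hωk x hxH hx) (fun j => ?_)
    (hcvx x hxH hx y (fun j => ⟨hyH j, fun i => (hgap i j).1, fun i => (hgap i j).2⟩) hy)
  exact neg_one_pow_mul_Phi_snoc_pos hωk1 hxH hx hℓ (hyH j) (fun i => (hgap i j).1)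
    (fun i => (hgap i j).2)
end

section
/- Let n ∈ ℕ with n ≥ 2, let H ⊆ ℝ with |H| ≥ n+1, let ω = (ω₁, …, ω_n) : H → ℝⁿ be an n-dimensional positive Chebyshev system over H such that ω_{⟨n−1⟩} is an (n−1)-dimensional positive Chebyshev system over H, and let f : H → ℝ. Suppose there exists ℓ ∈ {0, …, n−1} such that for each (n−1)-tuple x₁ < … < x_{n−1} in H, the function x ↦ [x₁, …, x_{n−1}, x; f]_ω is nondecreasing on H ∩ (−∞, x₁) if ℓ = 0, on H ∩ (x_ℓ, x_{ℓ+1}) if 0 < ℓ < n−1, and on H ∩ (x_{n−1}, +∞) if ℓ = n−1. Then f is ω-convex. -/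
/-!
Take `x₀ < ⋯ < xₙ` in `H`, let `u = x_ℓ`, `v = x_{ℓ+1}` and let `z` be the other `n - 1` points.
Subtracting from `f` its `ω`-interpolant `∑ cᵢ ωᵢ` at the `n` points other than `v` changes neither
`Φ_{(ω,f)}(x)` nor the monotonicity of `y ↦ [z, y; f]_ω`, which only shifts by `c_n`. The remainder
`g` vanishes on `z` and at `u`, so `[z, u; g]_ω = 0` while
`[z, v; g]_ω = g(v) Φ_{ω⟨n-1⟩}(z) / Φ_ω(z, v)`; monotonicity thus gives `g(v)` the sign of
`Φ_ω(z, v)`, namely `(-1)^(n-1-ℓ)`. Expanding `Φ_{(ω,g)}(x)` along its last row, where only `g(v)`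
survives, produces the same sign, hence `Φ_{(ω,f)}(x) ≥ 0`.
-/

section

variable {k : ℕ}

lemma Phi_comp_perm_s9 (F : Fin k → ℝ → ℝ) (a : Fin k → ℝ) (σ : Equiv.Perm (Fin k)) :
    Phi F (a ∘ σ) = Equiv.Perm.sign σ * Phi F a :=
  Matrix.det_permute' σ (Matrix.of fun i j => F i (a j))

lemma Phi_insertNth_eq_neg_one_pow_mul_cons (F : Fin (k + 1) → ℝ → ℝ) (p : Fin (k + 1)) (t : ℝ)
    (z : Fin k → ℝ) : Phi F (p.insertNth t z) = (-1) ^ (p : ℕ) * Phi F (Fin.cons t z) := by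
  rw [← Fin.cons_comp_cycleRange, Phi_comp_perm_s9, Fin.sign_cycleRange]
  push_cast
  rfl

lemma Phi_insertNth_eq_neg_one_pow_mul_snoc (F : Fin (k + 1) → ℝ → ℝ) (p : Fin (k + 1))
    (t : ℝ) (z : Fin k → ℝ) :
    Phi F (p.insertNth t z) = (-1) ^ (k + p) * Phi F (Fin.snoc z t) := by
  rw [← Fin.insertNth_last', Phi_insertNth_eq_neg_one_pow_mul_cons,
    Phi_insertNth_eq_neg_one_pow_mul_cons, ← mul_assoc, ← pow_add, Fin.val_last,
    add_right_comm, ← two_mul, pow_add, pow_mul]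
  simp

lemma Phi_snoc_eq_det_updateRow (F : Fin k → ℝ → ℝ) (h : ℝ → ℝ) (a : Fin (k + 1) → ℝ) :
    Phi (Fin.snoc F h) a =
      ((Matrix.of fun i j => (Fin.snoc F 0 : Fin (k + 1) → ℝ → ℝ) i (a j)).updateRow
        (Fin.last k) (h ∘ a)).det := by
  rw [Phi]
  congr 1
  ext i j
  induction i using Fin.lastCases <;> simp

noncomputable def lastRowDet (F : Fin k → ℝ → ℝ) (a : Fin (k + 1) → ℝ) : (ℝ → ℝ) →ₗ[ℝ] ℝ where
  toFun h := Phi (Fin.snoc F h) a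
  map_add' h₁ h₂ := by
    simp only [Phi_snoc_eq_det_updateRow F]
    exact Matrix.det_updateRow_add _ _ _ _
  map_smul' c h := by
    simp only [Phi_snoc_eq_det_updateRow F]
    exact Matrix.det_updateRow_smul _ _ _ _

lemma lastRowDet_apply (F : Fin k → ℝ → ℝ) (a : Fin (k + 1) → ℝ) (h : ℝ → ℝ) :
    lastRowDet F a h = Phi (Fin.snoc F h) a := rfl

lemma lastRowDet_self (F : Fin k → ℝ → ℝ) (a : Fin (k + 1) → ℝ) (i : Fin k) :
    lastRowDet F a (F i) = 0 :=
  Matrix.det_zero_of_row_eq (Fin.castSucc_lt_last i).ne (by ext; simp)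

lemma Phi_snoc_add_sum_smul (F : Fin k → ℝ → ℝ) (h : ℝ → ℝ) (c : Fin k → ℝ)
    (a : Fin (k + 1) → ℝ) : Phi (Fin.snoc F (h + ∑ i, c i • F i)) a = Phi (Fin.snoc F h) a := by
  simp [← lastRowDet_apply, map_sum, lastRowDet_self]

lemma divDiff_eq_s9 (ω : Fin (k + 1) → ℝ → ℝ) (f : ℝ → ℝ) (a : Fin (k + 1) → ℝ) :
    divDiff ω f a = Phi (Fin.snoc (Fin.init ω) f) a / Phi ω a := by
  rw [divDiff]
  congr 2
  ext i
  induction i using Fin.lastCases with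
  | last => simp
  | cast i => simp [Fin.init, i.isLt.ne]

lemma divDiff_add_sum_smul (ω : Fin (k + 1) → ℝ → ℝ) (f : ℝ → ℝ) (c : Fin (k + 1) → ℝ)
    {a : Fin (k + 1) → ℝ} (ha : Phi ω a ≠ 0) :
    divDiff ω (f + ∑ i, c i • ω i) a = divDiff ω f a + c (Fin.last k) := by
  have hlast : lastRowDet (Fin.init ω) a (ω (Fin.last k)) = Phi ω a := by
    rw [lastRowDet_apply, Fin.snoc_init_self]
  have hcast : ∀ i : Fin k, lastRowDet (Fin.init ω) a (ω i.castSucc) = 0 :=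
    lastRowDet_self _ _
  simp only [divDiff_eq_s9, ← lastRowDet_apply, map_add, map_sum, map_smul, Fin.sum_univ_castSucc]
  simp only [hcast, smul_eq_mul, mul_zero, Finset.sum_const_zero, hlast, zero_add, add_div,
    mul_div_cancel_right₀ _ ha]

lemma Phi_snoc_insertNth_of_forall_eq_zero (F : Fin k → ℝ → ℝ) (h : ℝ → ℝ) (p : Fin (k + 1))
    (t : ℝ) (z : Fin k → ℝ) (hz : ∀ i, h (z i) = 0) :
    Phi (Fin.snoc F h) (p.insertNth t z) = (-1) ^ (k + p : ℕ) * h t * Phi F z := by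
  rw [Phi, Matrix.det_succ_row _ (Fin.last k), Finset.sum_eq_single p]
  · simp only [Matrix.of_apply, Fin.snoc_last, Fin.insertNth_apply_same, Fin.val_last, Phi]
    congr 2
    ext i j
    simp [Fin.succAbove_last]
  · intro j _ hj
    obtain ⟨i, rfl⟩ := Fin.exists_succAbove_eq hj
    simp [hz]
  · simp

lemma exists_add_sum_smul_eq_zero {m : ℕ} (ω : Fin m → ℝ → ℝ) (f : ℝ → ℝ) {w : Fin m → ℝ}
    (hw : Phi ω w ≠ 0) : ∃ c : Fin m → ℝ, ∀ j, (f + ∑ i, c i • ω i) (w j) = 0 := by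
  have hM : IsUnit (Matrix.of fun i j => ω i (w j)) :=
    (Matrix.isUnit_iff_isUnit_det _).2 (isUnit_iff_ne_zero.2 hw)
  obtain ⟨c, hc⟩ := Matrix.vecMul_surjective_iff_isUnit.2 hM (-(f ∘ w))
  refine ⟨c, fun j => ?_⟩
  have := congrFun hc j
  simp only [Matrix.vecMul, dotProduct, Matrix.of_apply, Pi.neg_apply, Function.comp_apply,
    Pi.add_apply, Finset.sum_apply, Pi.smul_apply, smul_eq_mul] at this ⊢
  linarith

lemma divDiff_snoc_of_forall_eq_zero (ω : Fin (k + 1) → ℝ → ℝ) (g : ℝ → ℝ) {z : Fin k → ℝ}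
    (hz : ∀ i, g (z i) = 0) (t : ℝ) :
    divDiff ω g (Fin.snoc z t) = g t * Phi (Fin.init ω) z / Phi ω (Fin.snoc z t) := by
  rw [divDiff_eq_s9, ← Fin.insertNth_last' t z, Phi_snoc_insertNth_of_forall_eq_zero _ _ _ _ _ hz,
    Fin.val_last, Even.neg_one_pow ⟨k, rfl⟩, one_mul]

lemma Phi_snoc_removeNth_ne_zero {F : Fin (k + 1) → ℝ → ℝ} {y : Fin (k + 1) → ℝ}
    (hy : Phi F y ≠ 0) (p : Fin (k + 1)) : Phi F (Fin.snoc (p.removeNth y) (y p)) ≠ 0 := by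
  rw [← Fin.insertNth_self_removeNth p y, Phi_insertNth_eq_neg_one_pow_mul_snoc] at hy
  exact right_ne_zero_of_mul hy

/-- In 0-based indexing, the interval `(z (ℓ - 1), z ℓ)`, with `z (-1) = -∞` and `z k = +∞`. -/
def gap (z : Fin k → ℝ) (ℓ : ℕ) : Set ℝ :=
  {y | (∀ i : Fin k, (i : ℕ) < ℓ → z i < y) ∧ (∀ i : Fin k, ℓ ≤ (i : ℕ) → y < z i)}

lemma apply_mem_gap_removeNth {y : Fin (k + 1) → ℝ} (hy : StrictMono y) (p : Fin (k + 1)) :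
    y p ∈ gap (p.removeNth y) p := by
  rw [← Fin.insertNth_self_removeNth p y, Fin.strictMono_insertNth_iff] at hy
  refine ⟨fun i hi => hy.2.1 i ?_, fun i hi => hy.2.2 i ?_⟩ <;> simpa [Fin.lt_def, Fin.le_def]

lemma neg_one_pow_mul_nonneg_of_divDiff_le {ω : Fin (k + 1) → ℝ → ℝ} {g : ℝ → ℝ}
    {z : Fin k → ℝ} {p : Fin (k + 1)} {u v : ℝ} (hz : 0 < Phi (Fin.init ω) z)
    (hv : 0 < Phi ω (p.insertNth v z)) (hgz : ∀ i, g (z i) = 0) (hgu : g u = 0)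
    (hle : divDiff ω g (Fin.snoc z u) ≤ divDiff ω g (Fin.snoc z v)) :
    0 ≤ (-1) ^ (k + p : ℕ) * g v := by
  rw [divDiff_snoc_of_forall_eq_zero _ _ hgz, divDiff_snoc_of_forall_eq_zero _ _ hgz, hgu,
    zero_mul, zero_div, mul_div_right_comm] at hle
  rw [Phi_insertNth_eq_neg_one_pow_mul_snoc] at hv
  have hD : Phi ω (Fin.snoc z v) ≠ 0 := by
    rintro hD
    simp [hD] at hv
  calc 0 ≤ (-1) ^ (k + p : ℕ) * Phi ω (Fin.snoc z v) * (g v / Phi ω (Fin.snoc z v)) :=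
        mul_nonneg hv.le (nonneg_of_mul_nonneg_left hle hz)
    _ = (-1) ^ (k + p : ℕ) * g v := by field_simp

theorem isConvexWRT_of_monotoneOn_divDiff {H : Set ℝ} {ω : Fin (k + 1) → ℝ → ℝ} {f : ℝ → ℝ}
    (hω : IsPosChebyshev ω H) (hω' : IsPosChebyshev (Fin.init ω) H) {ℓ : ℕ} (hℓ : ℓ ≤ k)
    (hmono : ∀ z : Fin k → ℝ, (∀ i, z i ∈ H) → StrictMono z →
      MonotoneOn (fun y => divDiff ω f (Fin.snoc z y)) (H ∩ gap z ℓ)) :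
    IsConvexWRT ω H f := by
  intro x hxH hx
  set p : Fin (k + 1) := ⟨ℓ, by omega⟩
  set w := p.succ.removeNth x
  set s := p.castSucc.removeNth x
  set z := p.removeNth w
  have hw : StrictMono w := hx.comp (Fin.strictMono_succAbove _)
  have hs : StrictMono s := hx.comp (Fin.strictMono_succAbove _)
  have hz : StrictMono z := hw.comp (Fin.strictMono_succAbove _)
  have hzs : p.removeNth s = z := by
    simp [s, z, w, Fin.removeNth_removeNth_eq_swap x p p.castSucc]
  have hzH : ∀ i, z i ∈ H := fun i => hxH _
  have hPw : 0 < Phi ω w := hω w (fun _ => hxH _) hw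
  have hPs : 0 < Phi ω s := hω s (fun _ => hxH _) hs
  have hwp : w p = x p.castSucc := by simp [w, Fin.removeNth_apply]
  have hsp : s p = x p.succ := by simp [s, Fin.removeNth_apply]
  obtain ⟨c, hc⟩ := exists_add_sum_smul_eq_zero ω f hPw.ne'
  set g := f + ∑ i, c i • ω i
  have huv : w p ≤ s p := by
    rw [hwp, hsp]
    exact (hx (Fin.castSucc_lt_succ (i := p))).le
  have hle : divDiff ω g (Fin.snoc z (w p)) ≤ divDiff ω g (Fin.snoc z (s p)) := by
    rw [divDiff_add_sum_smul _ _ _ (Phi_snoc_removeNth_ne_zero hPw.ne' p),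
      divDiff_add_sum_smul _ _ _ (hzs ▸ Phi_snoc_removeNth_ne_zero hPs.ne' p)]
    gcongr
    exact hmono z hzH hz ⟨hxH _, apply_mem_gap_removeNth hw p⟩
      ⟨hxH _, hzs ▸ apply_mem_gap_removeNth hs p⟩ huv
  have hgv : 0 ≤ (-1) ^ (k + ℓ) * g (x p.succ) := by
    rw [← hsp]
    refine neg_one_pow_mul_nonneg_of_divDiff_le (p := p) (hω' z hzH hz) ?_ (fun i => hc _) (hc p)
      hle
    rwa [← hzs, Fin.insertNth_self_removeNth]
  calc (0 : ℝ) ≤ (-1) ^ (k + ℓ) * g (x p.succ) * Phi ω w := mul_nonneg hgv hPw.le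
    _ = Phi (Fin.snoc ω g) (p.succ.insertNth (x p.succ) w) := by
      rw [Phi_snoc_insertNth_of_forall_eq_zero _ _ _ _ _ hc, Fin.val_succ]
      ring
    _ = Phi (Fin.snoc ω f) x := by
      rw [Fin.insertNth_self_removeNth, Phi_snoc_add_sum_smul]

end

/-- Corollary 1 (Wąsowicz), (iii) ⇒ (i): if there exists `ℓ ∈ {0,…,n-1}` such that, for each
`x₁ < … < x_{n-1}` in `H`, the function `x ↦ [x₁,…,x_{n-1},x; f]_ω` is nondecreasing on
`H ∩ (-∞, x₁)` if `ℓ = 0`, on `H ∩ (x_ℓ, x_{ℓ+1})` if `0 < ℓ < n-1`, and on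
`H ∩ (x_{n-1}, ∞)` if `ℓ = n-1` (the three cases are captured uniformly by the set
`{y | x_i < y for i ≤ ℓ and y < x_i for i > ℓ}`), then `f` is `ω`-convex. -/
theorem divided_difference_monotone_implies_omega_convex (n : ℕ) (hn : 2 ≤ n) (H : Set ℝ)
    (ω : Fin n → ℝ → ℝ) (f : ℝ → ℝ)
    (hω : IsPosChebyshev ω H)
    (hω' : IsPosChebyshev (fun i : Fin (n - 1) => ω (Fin.castLE (by omega) i)) H)
    (hyp : ∃ ℓ : ℕ, ℓ ≤ n - 1 ∧
      ∀ x : Fin (n - 1) → ℝ, (∀ i, x i ∈ H) → StrictMono x →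
        MonotoneOn
          (fun y : ℝ => divDiff ω f (Fin.snoc x y ∘ Fin.cast (by omega : n = n - 1 + 1)))
          (H ∩ {y : ℝ | (∀ i : Fin (n - 1), (i : ℕ) < ℓ → x i < y) ∧
            (∀ i : Fin (n - 1), ℓ ≤ (i : ℕ) → y < x i)})) :
    IsConvexWRT ω H f := by
  obtain ⟨k, rfl⟩ : ∃ k, n = k + 1 := ⟨n - 1, by omega⟩
  obtain ⟨ℓ, hℓ, hmono⟩ := hyp
  exact isConvexWRT_of_monotoneOn_divDiff hω hω' hℓ hmono
end
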